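/- Two-sided uniqueness of coprime lcm representations: if w₁, w₂, z₁, z₂ ∈ S satisfy w₁·S ∩ z₁·S = w₂·S ∩ z₂·S and, for all i, j ∈ {1, 2}, the only common divisor of wᵢ and z_j in S is 1, then w₁ = w₂ and z₁ = z₂. -/

import Mathlib

open scoped BigOperators

/-- `u` divides `w` in `S`: `w ∈ u·S`. -/
def SDvd {G : Type*} [Group G] (S : Submonoid G) (u w : G) : Prop := ∃ s ∈ S, w = u * s

/-- The left set `u·S = {u * s : s ∈ S}`. -/
def leftSet {G : Type*} [Group G] (S : Submonoid G) (u : G) : Set G := {w | ∃ s ∈ S, w = u * s}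

/-- `τ(u)`: the number of ordered factorizations `u = v * w` with `v, w ∈ S`. -/
noncomputable def tau {G : Type*} [Group G] (S : Submonoid G) (u : G) : ℕ :=
  Set.ncard {p : G × G | p.1 ∈ S ∧ p.2 ∈ S ∧ p.1 * p.2 = u}

/-- An integral monoid: a submonoid of a group satisfying Axioms I, II, III. -/
structure IntegralMonoid {G : Type*} [Group G] (S : Submonoid G) : Prop where
  ax1 : ∀ u ∈ S, u⁻¹ ∈ S → u = 1
  ax2 : ∀ u : G, ∃ x ∈ S, ∃ y ∈ S, u = x * y⁻¹ ∧
        ∀ z ∈ S, ∀ w ∈ S, u = z * w⁻¹ → ∃ c ∈ S, z = x * c ∧ w = y * c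
  ax3 : ∀ u ∈ S, {p : G × G | p.1 ∈ S ∧ p.2 ∈ S ∧ p.1 * p.2 = u}.Finite

/-- Axiom IV′ (homogeneity), in the equivalent form proved in the paper. -/
def Homogeneous {G : Type*} [Group G] (S : Submonoid G) : Prop :=
  ∀ w u v : G, w ∈ S → u ∈ S → v ∈ S →
    (∀ d ∈ S, SDvd S d w → SDvd S d u → d = 1) →
    (∀ d ∈ S, SDvd S d w → SDvd S d v → d = 1) →
    leftSet S w ∩ leftSet S u = leftSet S w ∩ leftSet S v → u = v

/-!
Ordered by left divisibility, `S` behaves like a lattice: `u·S ∩ v·S` is principal by Axiom II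
(a least common multiple) and a common divisor of maximal `τ` is a greatest common divisor by
Axiom III. Homogeneity, transported along left multiplication by a common divisor `e`, says that
`b` is determined by `gcd(a, b)` and `lcm(a, b)` once `a` is fixed. This cancellation law gives
the distributivity `z₂ = z₂ ∧ (w₁ ∨ z₁) = z₂ ∧ z₁` (with `∧` = gcd, `∨` = lcm), so `z₂ ∣ z₁`;
by symmetry `z₁ = z₂`, and then homogeneity with respect to `z₁` gives `w₁ = w₂`.
-/

section IntegralMonoid

variable {G : Type*} [Group G] {S : Submonoid G}

def IsLcm (S : Submonoid G) (u v m : G) : Prop := leftSet S u ∩ leftSet S v = leftSet S m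

structure IsGcd (S : Submonoid G) (u v g : G) : Prop where
  sdvd_left : SDvd S g u
  sdvd_right : SDvd S g v
  sdvd_of_sdvd : ∀ d ∈ S, SDvd S d u → SDvd S d v → SDvd S d g

theorem mem_leftSet_self (u : G) : u ∈ leftSet S u := ⟨1, S.one_mem, (mul_one u).symm⟩

theorem sdvd_trans {u v w : G} (huv : SDvd S u v) (hvw : SDvd S v w) : SDvd S u w := by
  obtain ⟨s, hs, rfl⟩ := huv
  obtain ⟨t, ht, rfl⟩ := hvw
  exact ⟨s * t, S.mul_mem hs ht, mul_assoc u s t⟩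

theorem leftSet_subset_leftSet {u v : G} (h : SDvd S u v) : leftSet S v ⊆ leftSet S u :=
  fun _ => sdvd_trans h

theorem leftSet_eq_preimage_mul (e u : G) : leftSet S u = (e * ·) ⁻¹' leftSet S (e * u) := by
  ext x
  simp [leftSet, mul_assoc]

theorem IntegralMonoid.eq_one_of_mul_eq_one (hS : IntegralMonoid S) {a b : G} (ha : a ∈ S)
    (hb : b ∈ S) (hab : a * b = 1) : a = 1 :=
  hS.ax1 a ha (inv_eq_of_mul_eq_one_right hab ▸ hb)

theorem sdvd_antisymm (hS : IntegralMonoid S) {u v : G} (huv : SDvd S u v) (hvu : SDvd S v u) :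
    u = v := by
  obtain ⟨s, hs, rfl⟩ := huv
  obtain ⟨t, ht, hst⟩ := hvu
  have : s * t = 1 := by simpa [mul_assoc] using hst.symm
  rw [hS.eq_one_of_mul_eq_one hs ht this, mul_one]

namespace IsLcm

variable {u v m : G}

theorem sdvd_left (h : IsLcm S u v m) : SDvd S u m := (h.symm.subset (mem_leftSet_self m)).1

theorem sdvd_right (h : IsLcm S u v m) : SDvd S v m := (h.symm.subset (mem_leftSet_self m)).2

theorem sdvd_of_sdvd (h : IsLcm S u v m) {t : G} (hu : SDvd S u t) (hv : SDvd S v t) :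
    SDvd S m t :=
  h.subset ⟨hu, hv⟩

theorem of_sdvd_of_sdvd (h : IsLcm S u v m) {y : G} (huy : SDvd S u y) (hym : SDvd S y m) :
    IsLcm S v y m := by
  refine subset_antisymm (fun t ht => h.subset ⟨leftSet_subset_leftSet huy ht.2, ht.1⟩) ?_
  exact Set.subset_inter (leftSet_subset_leftSet h.sdvd_right) (leftSet_subset_leftSet hym)

end IsLcm

theorem exists_isLcm (hS : IntegralMonoid S) {u v : G} (hu : u ∈ S) :
    ∃ m ∈ S, IsLcm S u v m := by
  obtain ⟨x, hx, y, hy, hxy, hmin⟩ := hS.ax2 (u⁻¹ * v)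
  have hvy : v * y = u * x := by
    rw [show v = u * (u⁻¹ * v) by group, hxy]
    group
  refine ⟨u * x, S.mul_mem hu hx, subset_antisymm ?_ ?_⟩
  · rintro t ⟨⟨z, hz, rfl⟩, ⟨w, hw, hvw⟩⟩
    have : u⁻¹ * v = z * w⁻¹ := by
      rw [show v = v * w * w⁻¹ by group, ← hvw]
      group
    obtain ⟨c, hc, rfl, -⟩ := hmin z hz w hw this
    exact ⟨c, hc, (mul_assoc u x c).symm⟩
  · rintro t ⟨s, hs, rfl⟩
    exact ⟨⟨x * s, S.mul_mem hx hs, mul_assoc u x s⟩,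
      ⟨y * s, S.mul_mem hy hs, by rw [← hvy, mul_assoc]⟩⟩

theorem tau_lt_tau_mul (hS : IntegralMonoid S) {u c : G} (hu : u ∈ S) (hc : c ∈ S)
    (hc1 : c ≠ 1) : tau S u < tau S (u * c) := by
  set F := {p : G × G | p.1 ∈ S ∧ p.2 ∈ S ∧ p.1 * p.2 = u}
  set Fc := {p : G × G | p.1 ∈ S ∧ p.2 ∈ S ∧ p.1 * p.2 = u * c}
  let φ : G × G → G × G := fun p => (p.1, p.2 * c)
  have hφ : φ.Injective := fun p q h => by
    simp only [φ, Prod.mk.injEq, mul_left_inj] at h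
    exact Prod.ext h.1 h.2
  have hsub : φ '' F ⊆ Fc := by
    rintro _ ⟨⟨a, b⟩, ⟨ha, hb, rfl⟩, rfl⟩
    exact ⟨ha, S.mul_mem hb hc, (mul_assoc a b c).symm⟩
  have hnew : (u * c, 1) ∉ φ '' F := by
    rintro ⟨⟨a, b⟩, ⟨-, hb, -⟩, h⟩
    exact hc1 (hS.eq_one_of_mul_eq_one hc hb (mul_eq_one_comm.mp (congrArg Prod.snd h)))
  calc tau S u = (φ '' F).ncard := (Set.ncard_image_of_injective F hφ).symm
    _ < Fc.ncard := Set.ncard_lt_ncard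
        ⟨hsub, fun h => hnew (h ⟨S.mul_mem hu hc, S.one_mem, mul_one _⟩)⟩
        (hS.ax3 _ (S.mul_mem hu hc))

theorem exists_isGcd (hS : IntegralMonoid S) {u v : G} (hu : u ∈ S) (hv : v ∈ S) :
    ∃ g ∈ S, IsGcd S u v g := by
  set D := {d : G | d ∈ S ∧ SDvd S d u ∧ SDvd S d v}
  have hD : D.Finite := by
    refine ((hS.ax3 u hu).image Prod.fst).subset ?_
    rintro d ⟨hd, ⟨s, hs, hds⟩, -⟩
    exact ⟨(d, s), ⟨hd, hs, hds.symm⟩, rfl⟩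
  have h1 : (1 : G) ∈ D := ⟨S.one_mem, ⟨u, hu, (one_mul u).symm⟩, ⟨v, hv, (one_mul v).symm⟩⟩
  obtain ⟨g, ⟨hg, hgu, hgv⟩, hmax⟩ := D.exists_max_image (tau S) hD ⟨1, h1⟩
  refine ⟨g, hg, hgu, hgv, fun d hd hdu hdv => ?_⟩
  obtain ⟨t, ht, hlcm⟩ := exists_isLcm hS hg (v := d)
  obtain ⟨c, hc, rfl⟩ := hlcm.sdvd_left
  have hc1 : c = 1 := by
    by_contra hc1
    have htD : g * c ∈ D := ⟨ht, hlcm.sdvd_of_sdvd hgu hdu, hlcm.sdvd_of_sdvd hgv hdv⟩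
    exact (tau_lt_tau_mul hS hg hc hc1).not_ge (hmax _ htD)
  simpa [hc1] using hlcm.sdvd_right

theorem IsGcd.coprime_of_mul (hS : IntegralMonoid S) {e a b : G} (he : e ∈ S)
    (h : IsGcd S (e * a) (e * b) e) : ∀ d ∈ S, SDvd S d a → SDvd S d b → d = 1 := by
  rintro d hd ⟨s, hs, rfl⟩ ⟨t, ht, rfl⟩
  obtain ⟨r, hr, her⟩ := h.sdvd_of_sdvd (e * d) (S.mul_mem he hd)
    ⟨s, hs, by rw [mul_assoc]⟩ ⟨t, ht, by rw [mul_assoc]⟩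
  have : d * r = 1 := by simpa [mul_assoc] using her.symm
  exact hS.eq_one_of_mul_eq_one hd hr this

theorem Homogeneous.eq_of_isGcd (hhom : Homogeneous S) (hS : IntegralMonoid S) {a b c e : G}
    (he : e ∈ S) (hb : IsGcd S a b e) (hc : IsGcd S a c e)
    (h : leftSet S a ∩ leftSet S b = leftSet S a ∩ leftSet S c) : b = c := by
  obtain ⟨a₀, ha₀, rfl⟩ := hb.sdvd_left
  obtain ⟨b₀, hb₀, rfl⟩ := hb.sdvd_right
  obtain ⟨c₀, hc₀, rfl⟩ := hc.sdvd_right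
  congr 1
  refine hhom a₀ b₀ c₀ ha₀ hb₀ hc₀ (hb.coprime_of_mul hS he) (hc.coprime_of_mul hS he) ?_
  rw [leftSet_eq_preimage_mul e a₀, leftSet_eq_preimage_mul e b₀, leftSet_eq_preimage_mul e c₀,
    ← Set.preimage_inter, ← Set.preimage_inter, h]

/-- With `q = lcm(w, z')`, `g = gcd(z, q)` and `x = lcm(w, g)`, the elements `x ∣ q` have the same
gcd `g` and the same lcm `m` with `z`, so `x = q`; then `w` has the same lcm with `z'` and with
`g`, so `z' = g ∣ z`. -/
theorem sdvd_of_isLcm_of_coprime (hS : IntegralMonoid S) (hhom : Homogeneous S) {w z z' m : G}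
    (hw : w ∈ S) (hz : z ∈ S) (hz' : z' ∈ S) (hm : IsLcm S w z m) (hz'm : SDvd S z' m)
    (hwz : ∀ d ∈ S, SDvd S d w → SDvd S d z → d = 1)
    (hwz' : ∀ d ∈ S, SDvd S d w → SDvd S d z' → d = 1) : SDvd S z' z := by
  obtain ⟨q, hqS, hq⟩ := exists_isLcm hS hw (v := z')
  obtain ⟨g, hgS, hg⟩ := exists_isGcd hS hz hqS
  obtain ⟨x, hxS, hx⟩ := exists_isLcm hS hw (v := g)
  have hxq : SDvd S x q := hx.sdvd_of_sdvd hq.sdvd_left hg.sdvd_right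
  have hqm : SDvd S q m := hq.sdvd_of_sdvd hm.sdvd_left hz'm
  have hgx : IsGcd S z x g :=
    ⟨hg.sdvd_left, hx.sdvd_right, fun d hd hdz hdx => hg.sdvd_of_sdvd d hd hdz (sdvd_trans hdx hxq)⟩
  have hxq_eq : x = q := hhom.eq_of_isGcd hS hgS hgx hg <| by
    rw [hm.of_sdvd_of_sdvd hx.sdvd_left (sdvd_trans hxq hqm), hm.of_sdvd_of_sdvd hq.sdvd_left hqm]
  have hz'g : z' = g := hhom w z' g hw hz' hgS hwz'
    (fun d hd hdw hdg => hwz d hd hdw (sdvd_trans hdg hg.sdvd_left)) (by rw [hq, hx, hxq_eq])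
  exact hz'g ▸ hg.sdvd_left

end IntegralMonoid

theorem coprime_lcm_two_sided_unique {G : Type*} [Group G] (S : Submonoid G)
    (hS : IntegralMonoid S) (hhom : Homogeneous S)
    (w₁ w₂ z₁ z₂ : G) (hw₁ : w₁ ∈ S) (hw₂ : w₂ ∈ S) (hz₁ : z₁ ∈ S) (hz₂ : z₂ ∈ S)
    (hlcm : leftSet S w₁ ∩ leftSet S z₁ = leftSet S w₂ ∩ leftSet S z₂)
    (h11 : ∀ e ∈ S, SDvd S e w₁ → SDvd S e z₁ → e = 1)
    (h12 : ∀ e ∈ S, SDvd S e w₁ → SDvd S e z₂ → e = 1)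
    (h21 : ∀ e ∈ S, SDvd S e w₂ → SDvd S e z₁ → e = 1)
    (h22 : ∀ e ∈ S, SDvd S e w₂ → SDvd S e z₂ → e = 1) :
    w₁ = w₂ ∧ z₁ = z₂ := by
  obtain ⟨m, -, hm₁⟩ := exists_isLcm hS hw₁ (v := z₁)
  have hm₂ : IsLcm S w₂ z₂ m := hlcm.symm.trans hm₁
  have hz : z₁ = z₂ := sdvd_antisymm hS
    (sdvd_of_isLcm_of_coprime hS hhom hw₂ hz₂ hz₁ hm₂ hm₁.sdvd_right h22 h21)
    (sdvd_of_isLcm_of_coprime hS hhom hw₁ hz₁ hz₂ hm₁ hm₂.sdvd_right h11 h12)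
  refine ⟨hhom z₁ w₁ w₂ hz₁ hw₁ hw₂ (fun d hd h₁ h₂ => h11 d hd h₂ h₁)
    (fun d hd h₁ h₂ => h21 d hd h₂ h₁) ?_, hz⟩
  rw [Set.inter_comm, hlcm, hz, Set.inter_comm]
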